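/- arXiv:2303.14577 — 2 statements merged into one kernel-verified Lean document; each statement's English description precedes it below -/
import Mathlib

section
/- In the metric setting, if χ : X → K is a big Ramsey colouring (persistent and universal) of an action of a monoid M on a complete metric space X by isometric embeddings, then K is the big Ramsey degree of the action, i.e., K is universal and K ≤ L for every universal compactum L. -/
/-!
A universal colouring `χ : X → K` makes `K` universal already with `p = 1`. Conversely, if `L` is
universal, colouring `X` by `χ` itself yields, for each `ε > 0`, a 1-Lipschitz `f : L → K` that is
`ε`-close to `χ` on some `q • X`; since `χ (q • X)` is dense, `f` has `2ε`-dense range. The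
1-Lipschitz maps `L → K` form a compact subset of the product space, so along an ultrafilter these
`f` converge pointwise to a 1-Lipschitz `g`, and equicontinuity with compactness of `L` makes `g`
onto.
-/

/-- `K` is a universal compactum for the action `M ↷ X`. -/
def UnivCompactum (M X : Type) [Monoid M] [MulAction M X] [MetricSpace X]
    (K : Type) [MetricSpace K] [CompactSpace K] : Prop :=
  ∀ (L : Type) [MetricSpace L] [CompactSpace L] (ψ : X → L), LipschitzWith 1 ψ →
    ∀ ε : ℝ, 0 < ε → ∃ (q : M) (χ : X → K) (f : K → L),
      LipschitzWith 1 χ ∧ LipschitzWith 1 f ∧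
      ∀ x : X, dist (ψ (q • x)) (f (χ (q • x))) ≤ ε

/-- `χ : X → K` is a persistent colouring: `χ(p • X)` is dense for every `p`. -/
def PersistentCol (M X : Type) [Monoid M] [MulAction M X] [MetricSpace X]
    {K : Type} [MetricSpace K] (χ : X → K) : Prop :=
  ∀ p : M, Dense (Set.range (fun x : X => χ (p • x)))

/-- `χ : X → K` is a universal colouring. -/
def UniversalCol (M X : Type) [Monoid M] [MulAction M X] [MetricSpace X]
    {K : Type} [MetricSpace K] (χ : X → K) : Prop :=
  ∀ (L : Type) [MetricSpace L] [CompactSpace L] (ψ : X → L), LipschitzWith 1 ψ →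
    ∀ (p : M) (ε : ℝ), 0 < ε → ∃ (q : M) (f : K → L), LipschitzWith 1 f ∧
      ∀ x : X, dist (ψ ((p * q) • x)) (f (χ ((p * q) • x))) ≤ ε

open Filter Topology

section LipschitzLimits

variable {ι L K : Type*}

theorem exists_lipschitzWith_one_tendsto [PseudoEMetricSpace L] [PseudoEMetricSpace K]
    [CompactSpace K] (u : Ultrafilter ι) {f : ι → L → K} (hf : ∀ i, LipschitzWith 1 (f i)) :
    ∃ g : L → K, LipschitzWith 1 g ∧ Tendsto f u (𝓝 g) :=
  have : Nonempty (L → K) := ⟨f (u.nonempty_of_mem univ_mem).some⟩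
  ⟨(u.map f).lim,
    (isClosed_setOfPred_lipschitzWith 1).mem_of_tendsto (u.map f).le_nhds_lim
      (Eventually.of_forall hf),
    (u.map f).le_nhds_lim⟩

theorem tendsto_apply_of_lipschitzWith_one [PseudoMetricSpace L] [PseudoMetricSpace K]
    {l : Filter ι} {f : ι → L → K} (hf : ∀ i, LipschitzWith 1 (f i)) {g : L → K}
    (hg : Tendsto f l (𝓝 g)) {x : ι → L} {a : L} (hx : Tendsto x l (𝓝 a)) :
    Tendsto (fun i => f i (x i)) l (𝓝 (g a)) := by
  rw [tendsto_iff_dist_tendsto_zero] at hx ⊢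
  have hfa := (tendsto_iff_dist_tendsto_zero.1 (tendsto_pi_nhds.1 hg a))
  refine squeeze_zero (fun _ => dist_nonneg) (fun i => ?_) (by simpa using hx.add hfa)
  calc dist (f i (x i)) (g a) ≤ dist (f i (x i)) (f i a) + dist (f i a) (g a) :=
        dist_triangle _ _ _
    _ ≤ dist (x i) a + dist (f i a) (g a) := by
        gcongr; simpa using (hf i).dist_le_mul (x i) a

theorem surjective_of_tendsto_of_forall_dist_le [PseudoMetricSpace L] [CompactSpace L]
    [MetricSpace K] (u : Ultrafilter ι) {f : ι → L → K} (hf : ∀ i, LipschitzWith 1 (f i))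
    {g : L → K} (hg : Tendsto f u (𝓝 g)) {ε : ι → ℝ} (hε : Tendsto ε u (𝓝 0))
    (happrox : ∀ i k, ∃ l, dist (f i l) k ≤ ε i) : Function.Surjective g := by
  intro k
  choose x hx using fun i => happrox i k
  obtain ⟨a, -, ha⟩ := isCompact_univ.ultrafilter_le_nhds (u.map x) (by simp)
  refine ⟨a, tendsto_nhds_unique (tendsto_apply_of_lipschitzWith_one hf hg ha) ?_⟩
  exact tendsto_iff_dist_tendsto_zero.2 <| squeeze_zero (fun _ => dist_nonneg) hx hε

theorem exists_lipschitzWith_one_surjective_of_forall_approx [PseudoMetricSpace L]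
    [CompactSpace L] [MetricSpace K] [CompactSpace K]
    (h : ∀ ε : ℝ, 0 < ε → ∃ f : L → K, LipschitzWith 1 f ∧ ∀ k, ∃ l, dist (f l) k ≤ ε) :
    ∃ g : L → K, LipschitzWith 1 g ∧ Function.Surjective g := by
  choose f hf happrox using fun n : ℕ => h (1 / ((n : ℝ) + 1)) Nat.one_div_pos_of_nat
  let u : Ultrafilter ℕ := .of atTop
  obtain ⟨g, hg, hfg⟩ := exists_lipschitzWith_one_tendsto u hf
  exact ⟨g, hg, surjective_of_tendsto_of_forall_dist_le u hf hfg
    (tendsto_one_div_add_atTop_nhds_zero_nat.mono_left (Ultrafilter.of_le _)) happrox⟩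

end LipschitzLimits

section BigRamsey

variable {M X : Type} [Monoid M] [MulAction M X] [MetricSpace X]
  {K : Type} [MetricSpace K] [CompactSpace K] {χ : X → K}

theorem UniversalCol.univCompactum (huniv : UniversalCol M X χ) (hχ : LipschitzWith 1 χ) :
    UnivCompactum M X K := by
  intro L _ _ ψ hψ ε hε
  obtain ⟨q, f, hf, h⟩ := huniv L ψ hψ 1 ε hε
  exact ⟨q, χ, f, hχ, hf, by simpa using h⟩

theorem PersistentCol.exists_lipschitzWith_one_approx_of_univCompactum
    (hpers : PersistentCol M X χ) (hχ : LipschitzWith 1 χ) {L : Type} [MetricSpace L]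
    [CompactSpace L] (hL : UnivCompactum M X L) {ε : ℝ} (hε : 0 < ε) :
    ∃ f : L → K, LipschitzWith 1 f ∧ ∀ k, ∃ l, dist (f l) k ≤ ε := by
  obtain ⟨q, c, f, -, hf, hclose⟩ := hL K χ hχ (ε / 2) (half_pos hε)
  refine ⟨f, hf, fun k => ?_⟩
  obtain ⟨-, hy, x, rfl⟩ := Metric.dense_iff.1 (hpers q) k (ε / 2) (half_pos hε)
  refine ⟨c (q • x), ?_⟩
  calc dist (f (c (q • x))) k ≤ dist (f (c (q • x))) (χ (q • x)) + dist (χ (q • x)) k :=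
        dist_triangle _ _ _
    _ ≤ ε / 2 + ε / 2 := by
        gcongr
        · rw [dist_comm]; exact hclose x
        · exact (Metric.mem_ball.1 hy).le
    _ = ε := add_halves ε

end BigRamsey

theorem bigRamseyColouring_gives_degree_general
    (M X : Type) [Monoid M] [MulAction M X] [MetricSpace X]
    (K : Type) [MetricSpace K] [CompactSpace K]
    (χ : X → K) (hχ : LipschitzWith 1 χ)
    (hpers : PersistentCol M X χ) (huniv : UniversalCol M X χ) :
    UnivCompactum M X K ∧
      ∀ (L : Type) [MetricSpace L] [CompactSpace L], UnivCompactum M X L →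
        ∃ g : L → K, LipschitzWith 1 g ∧ Function.Surjective g :=
  ⟨huniv.univCompactum hχ, fun _ _ _ hL => exists_lipschitzWith_one_surjective_of_forall_approx
    fun _ hε => hpers.exists_lipschitzWith_one_approx_of_univCompactum hχ hL hε⟩

theorem bigRamseyColouring_gives_degree
    (M X : Type) [Monoid M] [MulAction M X] [MetricSpace X] [CompleteSpace X]
    (hiso : ∀ p : M, Isometry (fun x : X => p • x))
    (K : Type) [MetricSpace K] [CompactSpace K]
    (χ : X → K) (hχ : LipschitzWith 1 χ)
    (hpers : PersistentCol M X χ) (huniv : UniversalCol M X χ) :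
    UnivCompactum M X K ∧
      ∀ (L : Type) [MetricSpace L] [CompactSpace L], UnivCompactum M X L →
        ∃ g : L → K, LipschitzWith 1 g ∧ Function.Surjective g :=
  bigRamseyColouring_gives_degree_general M X K χ hχ hpers huniv
end

section
/- For a monoid M acting by isometric embeddings on a complete metric space X, if χ : X → K is a universal colouring and ψ : X → L is a persistent colouring (K, L compacta), then L ≤ K, i.e., there is a 1-Lipschitz surjection K → L. -/
open Filter Topology NNReal

theorem isCompact_setOf_lipschitzWith {K L : Type*} [PseudoMetricSpace K] [PseudoMetricSpace L]
    [CompactSpace L] (C : ℝ≥0) : IsCompact {g : C(K, L) | LipschitzWith C g} := by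
  refine ArzelaAscoli.isCompact_of_equicontinuous _ ?_ ?_
  · have himage : ContinuousMap.toFun '' {g : C(K, L) | LipschitzWith C g} =
        {g : K → L | LipschitzWith C g} := by
      ext g
      exact ⟨fun ⟨g', hg', hgg'⟩ => hgg' ▸ hg', fun hg => ⟨⟨g, hg.continuous⟩, hg, rfl⟩⟩
    rw [himage]
    exact (isClosed_setOfPred_lipschitzWith C).isCompact
  · exact (LipschitzWith.uniformEquicontinuous _ C fun g => g.2).equicontinuous

theorem surjective_of_tendsto_of_eventually_denseRange {K L : Type*} [TopologicalSpace K]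
    [CompactSpace K] [MetricSpace L] {F : ℕ → C(K, L)} {g : C(K, L)}
    (hFg : Tendsto F atTop (𝓝 g))
    (hdense : ∀ ε > 0, ∀ᶠ n in atTop, ∀ y, ∃ k, dist (F n k) y < ε) :
    Function.Surjective g := by
  intro y
  suffices y ∈ closure (Set.range g) by
    rwa [(isCompact_range g.continuous).isClosed.closure_eq] at this
  refine Metric.mem_closure_iff.2 fun ε hε => ?_
  obtain ⟨n, hnear, hn⟩ :=
    ((Metric.tendsto_nhds.1 hFg (ε / 2) (half_pos hε)).and (hdense (ε / 2) (half_pos hε))).exists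
  obtain ⟨k, hk⟩ := hn y
  refine ⟨g k, Set.mem_range_self k, ?_⟩
  calc dist y (g k) ≤ dist y (F n k) + dist (F n k) (g k) := dist_triangle _ _ _
    _ < ε / 2 + ε / 2 := by
      gcongr
      · rwa [dist_comm]
      · exact (ContinuousMap.dist_apply_le_dist k).trans_lt hnear
    _ = ε := add_halves ε

theorem UniversalCol.exists_lipschitzWith_forall_exists_dist_lt {M X K L : Type} [Monoid M]
    [MulAction M X] [MetricSpace X] [MetricSpace K] [MetricSpace L] [CompactSpace L]
    {χ : X → K} (huniv : UniversalCol M X χ) {ψ : X → L} (hψ : LipschitzWith 1 ψ)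
    (hpers : PersistentCol M X ψ) {ε : ℝ} (hε : 0 < ε) :
    ∃ f : K → L, LipschitzWith 1 f ∧ ∀ y, ∃ k, dist (f k) y < ε := by
  obtain ⟨q, f, hf, happrox⟩ := huniv L ψ hψ 1 (ε / 2) (half_pos hε)
  refine ⟨f, hf, fun y => ?_⟩
  obtain ⟨_, hz, x, rfl⟩ := Metric.dense_iff.1 (hpers (1 * q)) y (ε / 2) (half_pos hε)
  refine ⟨χ ((1 * q) • x), ?_⟩
  calc dist (f (χ ((1 * q) • x))) y
      ≤ dist (f (χ ((1 * q) • x))) (ψ ((1 * q) • x)) + dist (ψ ((1 * q) • x)) y :=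
        dist_triangle _ _ _
    _ < ε / 2 + ε / 2 := add_lt_add_of_le_of_lt ((dist_comm _ _).trans_le (happrox x)) hz
    _ = ε := add_halves ε

theorem persistent_le_universal_metric_general
    (M X : Type) [Monoid M] [MulAction M X] [MetricSpace X]
    (K L : Type) [MetricSpace K] [CompactSpace K] [MetricSpace L] [CompactSpace L]
    (χ : X → K) (huniv : UniversalCol M X χ)
    (ψ : X → L) (hψ : LipschitzWith 1 ψ) (hpers : PersistentCol M X ψ) :
    ∃ f : K → L, LipschitzWith 1 f ∧ Function.Surjective f := by
  choose f hf hdense using fun n : ℕ =>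
    huniv.exists_lipschitzWith_forall_exists_dist_lt hψ hpers (Nat.one_div_pos_of_nat (n := n))
  let F : ℕ → C(K, L) := fun n => ⟨f n, (hf n).continuous⟩
  obtain ⟨g, hg, φ, hφ, hFg⟩ := (isCompact_setOf_lipschitzWith 1).tendsto_subseq (x := F) hf
  refine ⟨g, hg, surjective_of_tendsto_of_eventually_denseRange hFg fun ε hε => ?_⟩
  have hsmall : ∀ᶠ n : ℕ in atTop, 1 / ((n : ℝ) + 1) < ε :=
    tendsto_one_div_add_atTop_nhds_zero_nat.eventually (gt_mem_nhds hε)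
  filter_upwards [hφ.tendsto_atTop.eventually hsmall] with n hn y
  obtain ⟨k, hk⟩ := hdense (φ n) y
  exact ⟨k, hk.trans hn⟩

theorem persistent_le_universal_metric
    (M X : Type) [Monoid M] [MulAction M X] [MetricSpace X] [CompleteSpace X]
    (hiso : ∀ p : M, Isometry (fun x : X => p • x))
    (K L : Type) [MetricSpace K] [CompactSpace K] [MetricSpace L] [CompactSpace L]
    (χ : X → K) (hχ : LipschitzWith 1 χ) (huniv : UniversalCol M X χ)
    (ψ : X → L) (hψ : LipschitzWith 1 ψ) (hpers : PersistentCol M X ψ) :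
    ∃ f : K → L, LipschitzWith 1 f ∧ Function.Surjective f :=
  persistent_le_universal_metric_general M X K L χ huniv ψ hψ hpers
end
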